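/- Under the longitudinal setup, the multi-step change-of-measure (inverse probability weighting) identity holds: for every bounded jointly measurable ψ : 𝓐_1×…×𝓐_τ × 𝓛_1 → ℝ, E[ ( ∏_{t=1}^τ r_t(A_t, H_t) ) · ψ(Ā, V) ] = E[ ∫ ψ(ā, V) ∏_{t=1}^τ λ_t(a_t, ā_{t-1}, V) d(ν_1 ⊗ … ⊗ ν_τ)(ā) ]. -/

import Mathlib

/-!
Peel off the last treatment. Given `H_{n+1}`, the treatment `A_{n+1}` has density `g_{n+1}`
with respect to `ν_{n+1}`, and `r_{n+1} g_{n+1} = λ_{n+1}` by positivity, so integrating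
`A_{n+1}` out turns `E[∏_{t ≤ n+1} r_t ψ]` into `E[∏_{t ≤ n} r_t ψ']`, where `ψ'` integrates the
last coordinate of `ψ` against `λ_{n+1}`. Since the earlier weights are functions of `H_{n+1}`
and `ψ'` is again bounded, induction applies, and Fubini on `ν_1 ⊗ ⋯ ⊗ ν_{n+1}` reassembles the
product density. The conditional-density step says that the joint law of `(H_t, A_t)` is
`law(H_t) ⊗ g_t ν_t`; this is checked on rectangles, where it is the defining property of the
conditional expectation.
-/

open MeasureTheory ProbabilityTheory

noncomputable section

/-- The type of the history `H_t = (A_1,…,A_{t-1}, L_1,…,L_t)`, encoded as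
`((A_1,…,A_{t-1}), (L_2,…,L_t), L_1)`. -/
def Hist (𝓐 𝓛 : ℕ → Type) (t : ℕ) : Type :=
  (∀ s : Fin (t - 1), 𝓐 (s + 1)) × (∀ s : Fin (t - 1), 𝓛 (s + 2)) × 𝓛 1

instance Hist.instMeasurableSpace (𝓐 𝓛 : ℕ → Type) [∀ t, MeasurableSpace (𝓐 t)]
    [∀ t, MeasurableSpace (𝓛 t)] (t : ℕ) : MeasurableSpace (Hist 𝓐 𝓛 t) :=
  inferInstanceAs (MeasurableSpace
    ((∀ s : Fin (t - 1), 𝓐 (s + 1)) × (∀ s : Fin (t - 1), 𝓛 (s + 2)) × 𝓛 1))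

/-- The treatment history `Ā_{t-1} = (A_1,…,A_{t-1})` contained in a history. -/
def Hist.abar {𝓐 𝓛 : ℕ → Type} {t : ℕ} (h : Hist 𝓐 𝓛 t) : ∀ s : Fin (t - 1), 𝓐 (s + 1) := h.1

/-- The baseline covariate `V = L_1` contained in a history. -/
def Hist.V {𝓐 𝓛 : ℕ → Type} {t : ℕ} (h : Hist 𝓐 𝓛 t) : 𝓛 1 := h.2.2

/-- The observed history `H_t(ω)` as a function of the underlying random variables. -/
def histOf {Ω : Type} (𝓐 𝓛 : ℕ → Type) (A : ∀ t, Ω → 𝓐 t) (Lv : ∀ t, Ω → 𝓛 t) (t : ℕ)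
    (ω : Ω) : Hist 𝓐 𝓛 t :=
  ⟨fun s => A (s + 1) ω, fun s => Lv (s + 2) ω, Lv 1 ω⟩

/-- The density ratio (stabilized weight)
`r_t(a, h) = λ_t(a, av_{t-1}, v) / g_t(a, h)`, set to `0` where `λ_t = 0`. -/
def ratio {𝓐 𝓛 : ℕ → Type} (g : ∀ t, 𝓐 t → Hist 𝓐 𝓛 t → ℝ)
    (lam : ∀ t, 𝓐 t → (∀ s : Fin (t - 1), 𝓐 (s + 1)) → 𝓛 1 → ℝ) (t : ℕ) (a : 𝓐 t)
    (h : Hist 𝓐 𝓛 t) : ℝ :=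
  if lam t a h.abar h.V = 0 then 0 else lam t a h.abar h.V / g t a h

/-- The longitudinal setup: a probability space carrying random variables
`L_1, A_1, …, L_τ, A_τ, Y`, with conditional densities `g_t` of `A_t` given `H_t`
with respect to σ-finite measures `ν_t`, user-given conditional densities
`λ_t(a, av_{t-1}, v)` integrating to one, positivity, and a bound `c` on the density
ratio `r_t`. -/
structure LongSetup (τ d : ℕ) (c : ℝ) where
  (Ω : Type)
  [mΩ : MeasurableSpace Ω]
  (𝓐 : ℕ → Type)
  [m𝓐 : ∀ t, MeasurableSpace (𝓐 t)]
  (𝓛 : ℕ → Type)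
  [m𝓛 : ∀ t, MeasurableSpace (𝓛 t)]
  (P : Measure Ω)
  [hP : IsProbabilityMeasure P]
  (A : ∀ t, Ω → 𝓐 t)
  (Lv : ∀ t, Ω → 𝓛 t)
  (Y : Ω → ℝ)
  (hτ : 1 ≤ τ)
  (mA : ∀ t, Measurable (A t))
  (mL : ∀ t, Measurable (Lv t))
  (mY : Measurable Y)
  (bY : ∃ C, ∀ ω, |Y ω| ≤ C)
  (ν : ∀ t, Measure (𝓐 t))
  (hν : ∀ t, SigmaFinite (ν t))
  (g : ∀ t, 𝓐 t → Hist 𝓐 𝓛 t → ℝ)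
  (mg : ∀ t, Measurable (fun p : 𝓐 t × Hist 𝓐 𝓛 t => g t p.1 p.2))
  (g_nonneg : ∀ t a h, 0 ≤ g t a h)
  (g_density : ∀ t, 1 ≤ t → t ≤ τ → ∀ f : 𝓐 t → ℝ, Measurable f → (∃ C, ∀ a, |f a| ≤ C) → (P[fun ω => f (A t ω)|MeasurableSpace.comap (histOf 𝓐 𝓛 A Lv t) inferInstance]) =ᵐ[P] fun ω => ∫ a, f a * g t a (histOf 𝓐 𝓛 A Lv t ω) ∂ν t)
  (lam : ∀ t, 𝓐 t → (∀ s : Fin (t - 1), 𝓐 (s + 1)) → 𝓛 1 → ℝ)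
  (mlam : ∀ t, Measurable (fun p : 𝓐 t × (∀ s : Fin (t - 1), 𝓐 (s + 1)) × 𝓛 1 => lam t p.1 p.2.1 p.2.2))
  (lam_nonneg : ∀ t a ab v, 0 ≤ lam t a ab v)
  (lam_prob : ∀ t, 1 ≤ t → t ≤ τ → ∀ (ab : ∀ s : Fin (t - 1), 𝓐 (s + 1)) (v : 𝓛 1), ∫ a, lam t a ab v ∂ν t = 1)
  (pos : ∀ t, 1 ≤ t → t ≤ τ → ∀ a h, 0 < lam t a (Hist.abar h) (Hist.V h) → 0 < g t a h)
  (c_nonneg : 0 ≤ c)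
  (r_bound : ∀ t, 1 ≤ t → t ≤ τ → ∀ᵐ ω ∂P, |ratio g lam t (A t ω) (histOf 𝓐 𝓛 A Lv t ω)| ≤ c)

attribute [instance] LongSetup.mΩ LongSetup.m𝓐 LongSetup.m𝓛 LongSetup.hP LongSetup.hν

namespace LongSetup

variable {τ d : ℕ} {c : ℝ} (S : LongSetup τ d c)

/-- The observed history `H_t`. -/
def H (t : ℕ) : S.Ω → Hist S.𝓐 S.𝓛 t := histOf S.𝓐 S.𝓛 S.A S.Lv t

/-- The density ratio `r_t` of the setup. -/
def r : ∀ t, ∀ _ : S.𝓐 t, Hist S.𝓐 S.𝓛 t → ℝ := ratio S.g S.lam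

/-- The full treatment vector `Ā = (A_1,…,A_τ)`. -/
def Abar (ω : S.Ω) : ∀ s : Fin τ, S.𝓐 (s + 1) := fun s => S.A (s + 1) ω

/-- The baseline covariate `V = L_1`. -/
def V (ω : S.Ω) : S.𝓛 1 := S.Lv 1 ω

/-- The σ-algebra `σ(A_t, H_t)`, with the convention that it is the trivial σ-algebra
for `t = 0`. -/
def sigmaAH (t : ℕ) : MeasurableSpace S.Ω :=
  if t = 0 then ⊥ else MeasurableSpace.comap (fun ω => (S.A t ω, S.H t ω)) inferInstance

/-- The σ-algebra `σ(H_t)`. -/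
def sigmaH (t : ℕ) : MeasurableSpace S.Ω :=
  MeasurableSpace.comap (S.H t) inferInstance

end LongSetup

end

open MeasureTheory ProbabilityTheory

noncomputable section

/-- The restriction `av_{t-1} = (a_1,…,a_{t-1})` of a full treatment vector
`av = (a_1,…,a_τ)` to its first `t-1` coordinates. -/
def truncA {𝓐 : ℕ → Type} {τ : ℕ} (av : ∀ s : Fin τ, 𝓐 (s + 1)) (t : ℕ) (_h2 : t ≤ τ) :
    ∀ s : Fin (t - 1), 𝓐 (s + 1) :=
  fun s => av ⟨s, by have := s.isLt; omega⟩

open scoped ENNReal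

theorem Finset.prod_Icc_one_eq_prod_fin {M : Type*} [CommMonoid M] (f : ℕ → M) (n : ℕ) :
    ∏ t ∈ Finset.Icc 1 n, f t = ∏ j : Fin n, f (j + 1) := by
  rw [Fin.prod_univ_eq_prod_range (fun j => f (j + 1)), Finset.range_eq_Ico,
    Finset.prod_Ico_add' f]
  rfl

namespace MeasurableEquiv

def piFinSnoc {n : ℕ} (α : Fin (n + 1) → Type*) [∀ i, MeasurableSpace (α i)] :
    ((∀ j : Fin n, α j.castSucc) × α (Fin.last n)) ≃ᵐ (∀ i, α i) where
  toEquiv := (Equiv.prodComm _ _).trans (Fin.snocEquiv α)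
  measurable_toFun := by
    change Measurable fun p : (∀ j : Fin n, α j.castSucc) × α (Fin.last n) =>
      (Fin.snoc p.1 p.2 : ∀ i, α i)
    refine measurable_pi_iff.2 fun i => ?_
    induction i using Fin.lastCases with
    | last => simpa using measurable_snd
    | cast j =>
      simp only [Fin.snoc_castSucc]
      exact (measurable_pi_apply j).comp measurable_fst
  measurable_invFun :=
    (measurable_pi_lambda _ fun _ => measurable_pi_apply _).prodMk (measurable_pi_apply _)

@[simp]
theorem piFinSnoc_apply {n : ℕ} (α : Fin (n + 1) → Type*) [∀ i, MeasurableSpace (α i)]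
    (p : (∀ j : Fin n, α j.castSucc) × α (Fin.last n)) :
    piFinSnoc α p = Fin.snoc p.1 p.2 :=
  rfl

end MeasurableEquiv

open MeasurableEquiv in
theorem MeasureTheory.measurePreserving_piFinSnoc {n : ℕ} {α : Fin (n + 1) → Type*}
    [∀ i, MeasurableSpace (α i)] (μ : ∀ i, Measure (α i)) [∀ i, SigmaFinite (μ i)] :
    MeasurePreserving (piFinSnoc α)
      ((Measure.pi fun j : Fin n => μ j.castSucc).prod (μ (Fin.last n))) (Measure.pi μ) := by
  refine ⟨(piFinSnoc α).measurable, (Measure.pi_eq fun s hs => ?_).symm⟩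
  have hpre : piFinSnoc α ⁻¹' Set.univ.pi s
      = (Set.univ.pi fun j : Fin n => s j.castSucc) ×ˢ s (Fin.last n) := by
    ext ⟨f, a⟩
    simp [Fin.forall_fin_succ']
  rw [Measure.map_apply (piFinSnoc α).measurable (.univ_pi hs), hpre, Measure.prod_prod,
    Measure.pi_pi, Fin.prod_univ_castSucc]

section CondDensity

variable {Ω α β : Type*} {mΩ : MeasurableSpace Ω} [MeasurableSpace α] [mβ : MeasurableSpace β]

/-- `k x` is a `ν`-density of the conditional law of `Y` given `X = x`. -/
def IsCondDensity (P : Measure Ω) (X : Ω → β) (Y : Ω → α) (ν : Measure α) (k : β → α → ℝ) :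
    Prop :=
  ∀ B, MeasurableSet B →
    P[(Y ⁻¹' B).indicator (1 : Ω → ℝ) | mβ.comap X] =ᵐ[P] fun ω => ∫ a in B, k (X ω) a ∂ν

variable {P : Measure Ω} [IsProbabilityMeasure P] {X : Ω → β} {Y : Ω → α} {ν : Measure α}
  {k : β → α → ℝ}

namespace IsCondDensity

theorem ae_integral_eq_one (hk : IsCondDensity P X Y ν k) (hX : Measurable X) :
    ∀ᵐ ω ∂P, Integrable (k (X ω)) ν ∧ ∫ a, k (X ω) a ∂ν = 1 := by
  have h := hk Set.univ MeasurableSet.univ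
  rw [Set.preimage_univ, Set.indicator_univ, Pi.one_def, condExp_const hX.comap_le] at h
  filter_upwards [h] with ω hω
  rw [Measure.restrict_univ] at hω
  exact ⟨.of_integral_ne_zero (by rw [← hω]; exact one_ne_zero), hω.symm⟩

theorem measure_inter_preimage (hk : IsCondDensity P X Y ν k) (hX : Measurable X)
    (hY : Measurable Y) {C : Set β} {B : Set α} (hC : MeasurableSet C) (hB : MeasurableSet B) :
    P (X ⁻¹' C ∩ Y ⁻¹' B) = ENNReal.ofReal (∫ ω in X ⁻¹' C, ∫ a in B, k (X ω) a ∂ν ∂P) := by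
  have hXC : MeasurableSet[mβ.comap X] (X ⁻¹' C) := ⟨C, hC, rfl⟩
  rw [← setIntegral_congr_ae (hX hC) ((hk B hB).mono fun _ h _ => h),
    setIntegral_condExp hX.comap_le ((integrable_const 1).indicator (hY hB)) hXC,
    integral_indicator_one (hY hB), measureReal_restrict_apply (hY hB), Set.inter_comm,
    ofReal_measureReal]

variable [SigmaFinite ν]

theorem withDensity_prod_apply_prod (hk : IsCondDensity P X Y ν k) (hX : Measurable X)
    (hk_meas : Measurable (Function.uncurry k)) (hk_nonneg : ∀ x a, 0 ≤ k x a) {C : Set β}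
    {B : Set α} (hC : MeasurableSet C) (hB : MeasurableSet B) :
    ((P.map X).prod ν).withDensity (fun p => ENNReal.ofReal (k p.1 p.2)) (C ×ˢ B)
      = ENNReal.ofReal (∫ ω in X ⁻¹' C, ∫ a in B, k (X ω) a ∂ν ∂P) := by
  have hkm : Measurable fun p : β × α => ENNReal.ofReal (k p.1 p.2) := hk_meas.ennreal_ofReal
  have hG_meas : Measurable fun ω => ∫ a in B, k (X ω) a ∂ν :=
    (hk_meas.stronglyMeasurable.integral_prod_right' (ν := ν.restrict B)).measurable.comp hX
  have hG : ∀ᵐ ω ∂P, ∫⁻ a in B, ENNReal.ofReal (k (X ω) a) ∂ν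
      = ENNReal.ofReal (∫ a in B, k (X ω) a ∂ν) ∧ 0 ≤ ∫ a in B, k (X ω) a ∂ν
      ∧ ∫ a in B, k (X ω) a ∂ν ≤ 1 := by
    filter_upwards [hk.ae_integral_eq_one hX] with ω ⟨hint, hone⟩
    refine ⟨(ofReal_integral_eq_lintegral_ofReal hint.integrableOn (.of_forall fun a =>
      hk_nonneg _ a)).symm, setIntegral_nonneg hB fun a _ => hk_nonneg _ a, ?_⟩
    exact hone ▸ setIntegral_le_integral hint (.of_forall fun a => hk_nonneg _ a)
  have hG_int : Integrable (fun ω => ∫ a in B, k (X ω) a ∂ν) P :=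
    .of_bound hG_meas.aestronglyMeasurable 1 (hG.mono fun ω h => by
      rw [Real.norm_eq_abs, abs_of_nonneg h.2.1]; exact h.2.2)
  rw [withDensity_apply _ (hC.prod hB), ← Measure.prod_restrict, lintegral_prod _ hkm.aemeasurable,
    Measure.restrict_map hX hC, lintegral_map hkm.lintegral_prod_right' hX,
    ofReal_integral_eq_lintegral_ofReal hG_int.integrableOn
      (ae_restrict_of_ae (hG.mono fun _ h => h.2.1))]
  exact lintegral_congr_ae (ae_restrict_of_ae (hG.mono fun _ h => h.1))

theorem map_prodMk_eq_withDensity (hk : IsCondDensity P X Y ν k) (hX : Measurable X)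
    (hY : Measurable Y) (hk_meas : Measurable (Function.uncurry k)) (hk_nonneg : ∀ x a, 0 ≤ k x a) :
    P.map (fun ω => (X ω, Y ω))
      = ((P.map X).prod ν).withDensity (fun p => ENNReal.ofReal (k p.1 p.2)) := by
  have hrect : ∀ C B, MeasurableSet C → MeasurableSet B →
      P.map (fun ω => (X ω, Y ω)) (C ×ˢ B)
        = ((P.map X).prod ν).withDensity (fun p => ENNReal.ofReal (k p.1 p.2)) (C ×ˢ B) :=
    fun C B hC hB => by
      rw [Measure.map_apply (hX.prodMk hY) (hC.prod hB), Set.mk_preimage_prod,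
        hk.measure_inter_preimage hX hY hC hB,
        hk.withDensity_prod_apply_prod hX hk_meas hk_nonneg hC hB]
  refine ext_of_generate_finite _ generateFrom_prod.symm isPiSystem_prod ?_ ?_
  · rintro _ ⟨C, hC, B, hB, rfl⟩
    exact hrect C B hC hB
  · simpa using hrect Set.univ Set.univ .univ .univ

theorem integral_comp_eq_integral_mul (hk : IsCondDensity P X Y ν k) (hX : Measurable X)
    (hY : Measurable Y) (hk_meas : Measurable (Function.uncurry k)) (hk_nonneg : ∀ x a, 0 ≤ k x a)
    {F : β → α → ℝ} (hF : Measurable (Function.uncurry F))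
    (hFi : Integrable (fun ω => F (X ω) (Y ω)) P) :
    ∫ ω, F (X ω) (Y ω) ∂P = ∫ ω, ∫ a, F (X ω) a * k (X ω) a ∂ν ∂P := by
  have hXY : Measurable fun ω => (X ω, Y ω) := hX.prodMk hY
  have hk' : Measurable fun p : β × α => (k p.1 p.2).toNNReal := hk_meas.real_toNNReal
  have hlaw : P.map (fun ω => (X ω, Y ω))
      = ((P.map X).prod ν).withDensity (fun p => ((k p.1 p.2).toNNReal : ℝ≥0∞)) :=
    hk.map_prodMk_eq_withDensity hX hY hk_meas hk_nonneg
  have hFi' : Integrable (fun p : β × α => (k p.1 p.2).toNNReal • F p.1 p.2)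
      ((P.map X).prod ν) := by
    rw [← integrable_withDensity_iff_integrable_smul hk', ← hlaw]
    exact (integrable_map_measure hF.aestronglyMeasurable hXY.aemeasurable).2 hFi
  have hsmul : ∀ x a, (k x a).toNNReal • F x a = F x a * k x a := fun x a => by
    rw [NNReal.smul_def, Real.coe_toNNReal _ (hk_nonneg x a), smul_eq_mul, mul_comm]
  calc ∫ ω, F (X ω) (Y ω) ∂P
      = ∫ p, F p.1 p.2 ∂P.map (fun ω => (X ω, Y ω)) :=
        (integral_map hXY.aemeasurable hF.aestronglyMeasurable).symm
    _ = ∫ x, ∫ a, F x a * k x a ∂ν ∂P.map X := by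
        rw [hlaw, integral_withDensity_eq_integral_smul hk', integral_prod _ hFi']
        simp only [hsmul]
    _ = ∫ ω, ∫ a, F (X ω) a * k (X ω) a ∂ν ∂P :=
        integral_map hX.aemeasurable
          (hF.mul hk_meas).stronglyMeasurable.integral_prod_right'.aestronglyMeasurable

end IsCondDensity

end CondDensity

section History

variable {𝓐 𝓛 : ℕ → Type}

def Hist.restrict {t : ℕ} (h : Hist 𝓐 𝓛 t) {s : ℕ} (hs : s ≤ t) : Hist 𝓐 𝓛 s :=
  ⟨fun j => h.1 ⟨j, by omega⟩, fun j => h.2.1 ⟨j, by omega⟩, h.2.2⟩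

theorem ratio_mul_of_ne_zero {g : ∀ t, 𝓐 t → Hist 𝓐 𝓛 t → ℝ}
    {lam : ∀ t, 𝓐 t → (∀ s : Fin (t - 1), 𝓐 (s + 1)) → 𝓛 1 → ℝ} {t : ℕ} {a : 𝓐 t}
    {h : Hist 𝓐 𝓛 t} (hg : lam t a h.abar h.V ≠ 0 → g t a h ≠ 0) :
    ratio g lam t a h * g t a h = lam t a h.abar h.V := by
  unfold ratio
  split_ifs with h0
  · rw [h0, zero_mul]
  · exact div_mul_cancel₀ _ (hg h0)

theorem truncA_snoc_castSucc {n : ℕ} (f : ∀ s : Fin n, 𝓐 (s + 1)) (a : 𝓐 (n + 1)) (s : Fin n) :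
    truncA (Fin.snoc f a : ∀ s : Fin (n + 1), 𝓐 (s + 1)) (s.castSucc + 1) s.castSucc.isLt
      = truncA f (s + 1) s.isLt := by
  funext j
  exact Fin.snoc_castSucc (α := fun s : Fin (n + 1) => 𝓐 (s + 1)) _ _ ⟨j, by omega⟩

theorem truncA_snoc_last {n : ℕ} (f : ∀ s : Fin n, 𝓐 (s + 1)) (a : 𝓐 (n + 1)) :
    truncA (Fin.snoc f a : ∀ s : Fin (n + 1), 𝓐 (s + 1)) (Fin.last n + 1) (Fin.last n).isLt
      = f := by
  funext j
  exact Fin.snoc_castSucc (α := fun s : Fin (n + 1) => 𝓐 (s + 1)) _ _ j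

variable [∀ t, MeasurableSpace (𝓐 t)] [∀ t, MeasurableSpace (𝓛 t)]

theorem Hist.measurable_restrict {t s : ℕ} (hs : s ≤ t) :
    Measurable fun h : Hist 𝓐 𝓛 t => h.restrict hs :=
  (measurable_pi_lambda _ fun _ => (measurable_pi_apply _).comp measurable_fst).prodMk
    ((measurable_pi_lambda _ fun _ => (measurable_pi_apply _).comp measurable_snd.fst).prodMk
      measurable_snd.snd)

theorem Hist.measurable_abar {t : ℕ} : Measurable fun h : Hist 𝓐 𝓛 t => h.abar :=
  measurable_fst

theorem Hist.measurable_V {t : ℕ} : Measurable fun h : Hist 𝓐 𝓛 t => h.V :=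
  measurable_snd.snd

theorem measurable_histOf {Ω : Type} [MeasurableSpace Ω] {A : ∀ t, Ω → 𝓐 t} {Lv : ∀ t, Ω → 𝓛 t}
    (hA : ∀ t, Measurable (A t)) (hL : ∀ t, Measurable (Lv t)) (t : ℕ) :
    Measurable (histOf 𝓐 𝓛 A Lv t) :=
  (measurable_pi_lambda _ fun _ => hA _).prodMk
    ((measurable_pi_lambda _ fun _ => hL _).prodMk (hL 1))

theorem measurable_ratio {g : ∀ t, 𝓐 t → Hist 𝓐 𝓛 t → ℝ}
    {lam : ∀ t, 𝓐 t → (∀ s : Fin (t - 1), 𝓐 (s + 1)) → 𝓛 1 → ℝ} {t : ℕ}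
    (hg : Measurable fun p : 𝓐 t × Hist 𝓐 𝓛 t => g t p.1 p.2)
    (hlam : Measurable fun p : 𝓐 t × (∀ s : Fin (t - 1), 𝓐 (s + 1)) × 𝓛 1 =>
      lam t p.1 p.2.1 p.2.2) :
    Measurable fun p : 𝓐 t × Hist 𝓐 𝓛 t => ratio g lam t p.1 p.2 := by
  have hl : Measurable fun p : 𝓐 t × Hist 𝓐 𝓛 t => lam t p.1 p.2.abar p.2.V :=
    hlam.comp (measurable_fst.prodMk ((Hist.measurable_abar.comp measurable_snd).prodMk
      (Hist.measurable_V.comp measurable_snd)))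
  exact Measurable.ite (hl (measurableSet_singleton 0)) measurable_const (hl.div hg)

end History

namespace LongSetup

open MeasurableEquiv

variable {τ d : ℕ} {c : ℝ} (S : LongSetup τ d c)

theorem measurable_H (t : ℕ) : Measurable (S.H t) :=
  measurable_histOf S.mA S.mL t

theorem measurable_r {β : Type*} [MeasurableSpace β] {t : ℕ} {a : β → S.𝓐 t}
    {h : β → Hist S.𝓐 S.𝓛 t} (ha : Measurable a) (hh : Measurable h) :
    Measurable fun x => S.r t (a x) (h x) :=
  (measurable_ratio (S.mg t) (S.mlam t)).comp (ha.prodMk hh)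

theorem measurable_lam {β : Type*} [MeasurableSpace β] {t : ℕ} {a : β → S.𝓐 t}
    {ab : β → ∀ s : Fin (t - 1), S.𝓐 (s + 1)} {v : β → S.𝓛 1} (ha : Measurable a)
    (hab : Measurable ab) (hv : Measurable v) :
    Measurable fun x => S.lam t (a x) (ab x) (v x) :=
  (S.mlam t).comp (ha.prodMk (hab.prodMk hv))

theorem r_mul_g {t : ℕ} (h1 : 1 ≤ t) (h2 : t ≤ τ) (a : S.𝓐 t) (h : Hist S.𝓐 S.𝓛 t) :
    S.r t a h * S.g t a h = S.lam t a h.abar h.V :=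
  ratio_mul_of_ne_zero fun h0 =>
    (S.pos t h1 h2 a h ((S.lam_nonneg t a _ _).lt_of_ne' h0)).ne'

theorem integrable_lam {t : ℕ} (h1 : 1 ≤ t) (h2 : t ≤ τ) (ab : ∀ s : Fin (t - 1), S.𝓐 (s + 1))
    (v : S.𝓛 1) : Integrable (fun a => S.lam t a ab v) (S.ν t) :=
  .of_integral_ne_zero (by rw [S.lam_prob t h1 h2 ab v]; exact one_ne_zero)

theorem lintegral_lam {t : ℕ} (h1 : 1 ≤ t) (h2 : t ≤ τ) (ab : ∀ s : Fin (t - 1), S.𝓐 (s + 1))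
    (v : S.𝓛 1) : ∫⁻ a, ENNReal.ofReal (S.lam t a ab v) ∂S.ν t = 1 := by
  rw [← ofReal_integral_eq_lintegral_ofReal (S.integrable_lam h1 h2 ab v)
    (.of_forall fun a => S.lam_nonneg t a ab v), S.lam_prob t h1 h2 ab v, ENNReal.ofReal_one]

theorem isCondDensity_g {t : ℕ} (h1 : 1 ≤ t) (h2 : t ≤ τ) :
    IsCondDensity S.P (S.H t) (S.A t) (S.ν t) (fun h a => S.g t a h) := by
  intro B hB
  refine (S.g_density t h1 h2 (B.indicator 1) (measurable_const.indicator hB)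
    ⟨1, fun a => ?_⟩).trans (.of_forall fun ω => ?_)
  · unfold Set.indicator
    split_ifs <;> simp
  · dsimp only
    rw [← integral_indicator hB]
    congr with a
    by_cases ha : a ∈ B <;> simp [ha, H]

theorem integral_r_mul {t : ℕ} (h1 : 1 ≤ t) (h2 : t ≤ τ) {F : S.𝓐 t → Hist S.𝓐 S.𝓛 t → ℝ}
    (hF : Measurable fun p : S.𝓐 t × Hist S.𝓐 S.𝓛 t => F p.1 p.2)
    (hFi : Integrable (fun ω => F (S.A t ω) (S.H t ω)) S.P) :
    ∫ ω, S.r t (S.A t ω) (S.H t ω) * F (S.A t ω) (S.H t ω) ∂S.P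
      = ∫ ω, ∫ a, F a (S.H t ω) * S.lam t a (S.H t ω).abar (S.H t ω).V ∂S.ν t ∂S.P := by
  have hrF : Integrable (fun ω => S.r t (S.A t ω) (S.H t ω) * F (S.A t ω) (S.H t ω)) S.P :=
    hFi.bdd_mul (S.measurable_r (S.mA t) (S.measurable_H t)).aestronglyMeasurable
      (S.r_bound t h1 h2)
  rw [(S.isCondDensity_g h1 h2).integral_comp_eq_integral_mul (F := fun h a => S.r t a h * F a h)
    (S.measurable_H t) (S.mA t) ((S.mg t).comp measurable_swap) (fun h a => S.g_nonneg t a h)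
    ((S.measurable_r measurable_snd measurable_fst).mul (hF.comp measurable_swap)) hrF]
  simp_rw [mul_right_comm _ (F _ _), S.r_mul_g h1 h2, mul_comm]

def lamProd (n : ℕ) (v : S.𝓛 1) (av : ∀ s : Fin n, S.𝓐 (s + 1)) : ℝ :=
  ∏ s : Fin n, S.lam (s + 1) (av s) (truncA av (s + 1) s.isLt) v

theorem measurable_lamProd (n : ℕ) (v : S.𝓛 1) : Measurable (S.lamProd n v) :=
  Finset.measurable_prod _ fun s _ => S.measurable_lam (measurable_pi_apply s)
    (measurable_pi_lambda _ fun _ => measurable_pi_apply _) measurable_const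

theorem lamProd_nonneg (n : ℕ) (v : S.𝓛 1) (av : ∀ s : Fin n, S.𝓐 (s + 1)) :
    0 ≤ S.lamProd n v av :=
  Finset.prod_nonneg fun _ _ => S.lam_nonneg _ _ _ _

theorem lamProd_snoc {n : ℕ} (v : S.𝓛 1) (f : ∀ s : Fin n, S.𝓐 (s + 1)) (a : S.𝓐 (n + 1)) :
    S.lamProd (n + 1) v (Fin.snoc f a) = S.lamProd n v f * S.lam (n + 1) a f v := by
  rw [lamProd, Fin.prod_univ_castSucc]
  congr 1
  · refine Finset.prod_congr rfl fun s _ => ?_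
    rw [Fin.snoc_castSucc, truncA_snoc_castSucc]
    rfl
  · rw [Fin.snoc_last, truncA_snoc_last]
    rfl

theorem lintegral_lamProd : ∀ n ≤ τ, ∀ v : S.𝓛 1,
    ∫⁻ av, ENNReal.ofReal (S.lamProd n v av) ∂Measure.pi (fun s : Fin n => S.ν (s + 1)) = 1
  | 0, _, v => by simp [lamProd]
  | n + 1, hn, v => by
    have hsnoc := measurePreserving_piFinSnoc fun s : Fin (n + 1) => S.ν (s + 1)
    rw [← hsnoc.lintegral_comp_emb (piFinSnoc _).measurableEmbedding,
      lintegral_prod (fun p => ENNReal.ofReal (S.lamProd (n + 1) v (piFinSnoc _ p)))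
        ((S.measurable_lamProd _ v).ennreal_ofReal.comp (piFinSnoc _).measurable).aemeasurable]
    change ∫⁻ f : (∀ s : Fin n, S.𝓐 (s + 1)), ∫⁻ a : S.𝓐 (n + 1),
        ENNReal.ofReal (S.lamProd (n + 1) v (Fin.snoc f a)) ∂S.ν (n + 1)
        ∂Measure.pi (fun s : Fin n => S.ν (s + 1)) = 1
    simp only [S.lamProd_snoc, ENNReal.ofReal_mul (S.lamProd_nonneg _ _ _),
      lintegral_const_mul' _ _ ENNReal.ofReal_ne_top, S.lintegral_lam (Nat.le_add_left 1 n) hn,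
      mul_one]
    exact lintegral_lamProd n (by omega) v

theorem integrable_lamProd {n : ℕ} (hn : n ≤ τ) (v : S.𝓛 1) :
    Integrable (S.lamProd n v) (Measure.pi fun s : Fin n => S.ν (s + 1)) :=
  ⟨(S.measurable_lamProd n v).aestronglyMeasurable,
    (hasFiniteIntegral_iff_ofReal (.of_forall (S.lamProd_nonneg n v))).2
      (by rw [S.lintegral_lamProd n hn v]; exact ENNReal.one_lt_top)⟩

theorem integral_mul_lamProd_succ {n : ℕ} (hn : n + 1 ≤ τ)
    {ψ : (∀ s : Fin (n + 1), S.𝓐 (s + 1)) → ℝ} (hψ : Measurable ψ) {C : ℝ}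
    (hC : ∀ av, |ψ av| ≤ C) (v : S.𝓛 1) :
    ∫ av, ψ av * S.lamProd (n + 1) v av ∂Measure.pi (fun s : Fin (n + 1) => S.ν (s + 1))
      = ∫ f, (∫ a, ψ (Fin.snoc f a) * S.lam (n + 1) a f v ∂S.ν (n + 1)) * S.lamProd n v f
          ∂Measure.pi (fun s : Fin n => S.ν (s + 1)) := by
  have hsnoc := measurePreserving_piFinSnoc fun s : Fin (n + 1) => S.ν (s + 1)
  have hint : Integrable (fun av => ψ av * S.lamProd (n + 1) v av)
      (Measure.pi fun s : Fin (n + 1) => S.ν (s + 1)) :=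
    (S.integrable_lamProd hn v).bdd_mul hψ.aestronglyMeasurable (.of_forall hC)
  rw [← hsnoc.integral_comp', integral_prod (fun p => ψ (piFinSnoc _ p) *
    S.lamProd (n + 1) v (piFinSnoc _ p))
    ((hsnoc.integrable_comp_emb (piFinSnoc _).measurableEmbedding).2 hint)]
  change ∫ f, ∫ a, ψ (Fin.snoc f a) * S.lamProd (n + 1) v (Fin.snoc f a) ∂S.ν (n + 1)
      ∂Measure.pi (fun s : Fin n => S.ν (s + 1)) = _
  congr with f
  rw [← integral_mul_const]
  congr with a
  rw [S.lamProd_snoc]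
  ring

def weightedTest (n : ℕ) (φ : (∀ s : Fin (n + 1), S.𝓐 (s + 1)) → S.𝓛 1 → ℝ)
    (a : S.𝓐 (n + 1)) (h : Hist S.𝓐 S.𝓛 (n + 1)) : ℝ :=
  (∏ j : Fin n, S.r (j + 1) (h.abar j) (h.restrict (Nat.succ_le_succ j.isLt.le))) *
    φ (Fin.snoc h.abar a) h.V

theorem weightedTest_A_H (n : ℕ) (φ : (∀ s : Fin (n + 1), S.𝓐 (s + 1)) → S.𝓛 1 → ℝ)
    (ω : S.Ω) :
    S.weightedTest n φ (S.A (n + 1) ω) (S.H (n + 1) ω)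
      = (∏ j : Fin n, S.r (j + 1) (S.A (j + 1) ω) (S.H (j + 1) ω)) *
          φ (fun s => S.A (s + 1) ω) (S.V ω) := by
  rw [weightedTest, ← Fin.snoc_init_self (α := fun s : Fin (n + 1) => S.𝓐 (s + 1))
    fun s : Fin (n + 1) => S.A (s + 1) ω]
  rfl

theorem measurable_weightedTest {n : ℕ} {φ : (∀ s : Fin (n + 1), S.𝓐 (s + 1)) → S.𝓛 1 → ℝ}
    (hφ : Measurable (Function.uncurry φ)) :
    Measurable fun p : S.𝓐 (n + 1) × Hist S.𝓐 S.𝓛 (n + 1) => S.weightedTest n φ p.1 p.2 := by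
  have hsnoc : Measurable fun p : S.𝓐 (n + 1) × Hist S.𝓐 S.𝓛 (n + 1) =>
      (Fin.snoc p.2.abar p.1 : ∀ s : Fin (n + 1), S.𝓐 (s + 1)) :=
    (piFinSnoc fun s : Fin (n + 1) => S.𝓐 (s + 1)).measurable.comp
      (f := fun p : S.𝓐 (n + 1) × Hist S.𝓐 S.𝓛 (n + 1) => (p.2.abar, p.1))
      ((Hist.measurable_abar.comp measurable_snd).prodMk measurable_fst)
  have hweight : Measurable fun h : Hist S.𝓐 S.𝓛 (n + 1) =>
      ∏ j : Fin n, S.r (j + 1) (h.abar j) (h.restrict (Nat.succ_le_succ j.isLt.le)) :=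
    Finset.measurable_prod _ fun j _ => S.measurable_r
      ((measurable_pi_apply j).comp Hist.measurable_abar) (Hist.measurable_restrict _)
  exact (hweight.comp measurable_snd).mul
    (hφ.comp (hsnoc.prodMk (Hist.measurable_V.comp measurable_snd)))

theorem integrable_weightedTest {n : ℕ} (hn : n ≤ τ)
    {φ : (∀ s : Fin (n + 1), S.𝓐 (s + 1)) → S.𝓛 1 → ℝ} (hφ : Measurable (Function.uncurry φ))
    {C : ℝ} (hC : ∀ av v, |φ av v| ≤ C) :
    Integrable (fun ω => S.weightedTest n φ (S.A (n + 1) ω) (S.H (n + 1) ω)) S.P := by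
  refine .of_bound ((S.measurable_weightedTest hφ).comp
    ((S.mA _).prodMk (S.measurable_H _))).aestronglyMeasurable (c ^ n * C) ?_
  filter_upwards [ae_all_iff.2 fun j : Fin n => S.r_bound (j + 1) (Nat.le_add_left 1 j) (by omega)]
    with ω hω
  have hprod : |∏ j : Fin n, S.r (j + 1) (S.A (j + 1) ω) (S.H (j + 1) ω)| ≤ c ^ n := by
    rw [Finset.abs_prod]
    exact (Finset.prod_le_prod (fun _ _ => abs_nonneg _) fun j _ => hω j).trans_eq (by simp)
  rw [S.weightedTest_A_H, Real.norm_eq_abs, abs_mul]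
  exact mul_le_mul hprod (hC _ _) (abs_nonneg _) (pow_nonneg S.c_nonneg n)

def integrateLast (n : ℕ) (φ : (∀ s : Fin (n + 1), S.𝓐 (s + 1)) → S.𝓛 1 → ℝ)
    (f : ∀ s : Fin n, S.𝓐 (s + 1)) (v : S.𝓛 1) : ℝ :=
  ∫ a, φ (Fin.snoc f a) v * S.lam (n + 1) a f v ∂S.ν (n + 1)

theorem measurable_integrateLast {n : ℕ} {φ : (∀ s : Fin (n + 1), S.𝓐 (s + 1)) → S.𝓛 1 → ℝ}
    (hφ : Measurable (Function.uncurry φ)) :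
    Measurable (Function.uncurry (S.integrateLast n φ)) := by
  have hsnoc : Measurable fun q : ((∀ s : Fin n, S.𝓐 (s + 1)) × S.𝓛 1) × S.𝓐 (n + 1) =>
      (Fin.snoc q.1.1 q.2 : ∀ s : Fin (n + 1), S.𝓐 (s + 1)) :=
    (piFinSnoc _).measurable.comp (measurable_fst.fst.prodMk measurable_snd)
  exact ((hφ.comp (hsnoc.prodMk measurable_fst.snd)).mul (S.measurable_lam measurable_snd
    measurable_fst.fst measurable_fst.snd)).stronglyMeasurable.integral_prod_right'.measurable

theorem abs_integrateLast_le {n : ℕ} (hn : n + 1 ≤ τ)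
    {φ : (∀ s : Fin (n + 1), S.𝓐 (s + 1)) → S.𝓛 1 → ℝ} {C : ℝ} (hC : ∀ av v, |φ av v| ≤ C)
    (f : ∀ s : Fin n, S.𝓐 (s + 1)) (v : S.𝓛 1) : |S.integrateLast n φ f v| ≤ C := by
  have hlam := S.integrable_lam (Nat.le_add_left 1 n) hn f v
  calc |S.integrateLast n φ f v| ≤ ∫ a, C * S.lam (n + 1) a f v ∂S.ν (n + 1) :=
        norm_integral_le_of_norm_le (f := fun a => φ (Fin.snoc f a) v * S.lam (n + 1) a f v)
          (hlam.const_mul C) (.of_forall fun a => by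
          rw [Real.norm_eq_abs, abs_mul, abs_of_nonneg (S.lam_nonneg _ _ _ _)]
          exact mul_le_mul_of_nonneg_right (hC _ _) (S.lam_nonneg _ _ _ _))
    _ = C := by rw [integral_const_mul, S.lam_prob _ (Nat.le_add_left 1 n) hn, mul_one]

theorem integral_prod_r_mul_succ {n : ℕ} (hn : n + 1 ≤ τ)
    {φ : (∀ s : Fin (n + 1), S.𝓐 (s + 1)) → S.𝓛 1 → ℝ} (hφ : Measurable (Function.uncurry φ))
    {C : ℝ} (hC : ∀ av v, |φ av v| ≤ C) :
    ∫ ω, (∏ j : Fin (n + 1), S.r (j + 1) (S.A (j + 1) ω) (S.H (j + 1) ω)) *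
        φ (fun s => S.A (s + 1) ω) (S.V ω) ∂S.P
      = ∫ ω, (∏ j : Fin n, S.r (j + 1) (S.A (j + 1) ω) (S.H (j + 1) ω)) *
          S.integrateLast n φ (fun s => S.A (s + 1) ω) (S.V ω) ∂S.P :=
  calc _ = ∫ ω, S.r (n + 1) (S.A (n + 1) ω) (S.H (n + 1) ω) *
          S.weightedTest n φ (S.A (n + 1) ω) (S.H (n + 1) ω) ∂S.P := by
        congr with ω
        rw [S.weightedTest_A_H, Fin.prod_univ_castSucc, mul_right_comm, mul_comm (S.r _ _ _)]
        rfl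
    _ = ∫ ω, ∫ a, S.weightedTest n φ a (S.H (n + 1) ω) *
          S.lam (n + 1) a (S.H (n + 1) ω).abar (S.H (n + 1) ω).V ∂S.ν (n + 1) ∂S.P :=
        S.integral_r_mul (Nat.le_add_left 1 n) hn (S.measurable_weightedTest hφ)
          (S.integrable_weightedTest (by omega) hφ hC)
    _ = _ := by
        congr with ω
        rw [integrateLast, ← integral_const_mul]
        congr with a
        exact mul_assoc _ _ _

theorem integral_prod_r_mul : ∀ n ≤ τ, ∀ {φ : (∀ s : Fin n, S.𝓐 (s + 1)) → S.𝓛 1 → ℝ},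
    Measurable (Function.uncurry φ) → ∀ {C : ℝ}, (∀ av v, |φ av v| ≤ C) →
    ∫ ω, (∏ j : Fin n, S.r (j + 1) (S.A (j + 1) ω) (S.H (j + 1) ω)) *
        φ (fun s => S.A (s + 1) ω) (S.V ω) ∂S.P
      = ∫ ω, ∫ av, φ av (S.V ω) * S.lamProd n (S.V ω) av
          ∂Measure.pi (fun s : Fin n => S.ν (s + 1)) ∂S.P
  | 0, _, φ, hφ, _, _ => by
    simp only [Finset.univ_eq_empty, Finset.prod_empty, one_mul, lamProd, mul_one]
    congr with ω
    rw [Measure.pi_of_empty (x := fun s : Fin 0 => S.A (s + 1) ω),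
      integral_dirac' (fun av => φ av _) _
        (hφ.comp (measurable_id.prodMk measurable_const)).stronglyMeasurable]
  | n + 1, hn, φ, hφ, C, hC => by
    rw [S.integral_prod_r_mul_succ hn hφ hC, integral_prod_r_mul n (by omega)
      (S.measurable_integrateLast hφ) (S.abs_integrateLast_le hn hC)]
    congr with ω
    exact (S.integral_mul_lamProd_succ hn (hφ.comp (measurable_id.prodMk measurable_const))
      (fun av => hC av _) _).symm

end LongSetup

/-- multi-step change of measure / IPW identity: for every bounded
jointly measurable `ψ : 𝓐_1 × ⋯ × 𝓐_τ × 𝓛_1 → ℝ`,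
`E[(∏_{t=1}^τ r_t(A_t,H_t)) ψ(Ā, V)] = E[∫ ψ(av, V) ∏_{t=1}^τ λ_t(a_t, av_{t-1}, V) d(ν_1 ⊗ ⋯ ⊗ ν_τ)(av)]`. -/
theorem multi_step_change_of_measure {τ d : ℕ} {c : ℝ} (S : LongSetup τ d c)
    (ψ : (∀ s : Fin τ, S.𝓐 (s + 1)) → S.𝓛 1 → ℝ)
    (mψ : Measurable fun p : (∀ s : Fin τ, S.𝓐 (s + 1)) × S.𝓛 1 => ψ p.1 p.2)
    (bψ : ∃ C, ∀ av v, |ψ av v| ≤ C) :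
    ∫ ω, (∏ t ∈ Finset.Icc 1 τ, S.r t (S.A t ω) (S.H t ω)) * ψ (S.Abar ω) (S.V ω) ∂S.P
      = ∫ ω, ∫ av, ψ av (S.V ω) *
            ∏ s : Fin τ, S.lam (s + 1) (av s) (truncA av (s + 1) s.isLt) (S.V ω)
          ∂(Measure.pi fun s : Fin τ => S.ν (s + 1)) ∂S.P := by
  obtain ⟨C, hC⟩ := bψ
  simp_rw [Finset.prod_Icc_one_eq_prod_fin]
  exact S.integral_prod_r_mul τ le_rfl mψ hC

end
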